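/- arXiv:2310.15935 — 5 statements merged into one kernel-verified Lean document; each statement's English description precedes it below -/
import Mathlib

section
/- Let X ⊆ ℝ^d be a sequence-form strategy polytope (defined by x(∅)=1, x(p_j)=Σ_{a∈A_j} x(ja) for each decision point j, and x ≥ 0). Then for every linear map f : ℝ^d → ℝ that is nonnegative on X, there exists a unique vector c ∈ ℝ^d such that (1) f(x) = ⟨c, x⟩ for all x ∈ X, (2) c has all nonnegative entries, and (3) for every decision point j there is at least one action a ∈ A_j with c(ja) = 0. -/
/-- A tree-form decision problem: sequences `Seq` (observation points, with root `∅`),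
decision points `Dp`, where `seqs j` is the set of sequences `ja` for actions `a ∈ A_j`,
`parentSeq j = p_j`, `parentDp σ` the decision point immediately preceding `σ` (none for the root),
`children σ = C_σ`, and `depth` counts the number of decision points above a sequence. -/
structure TFDP where
  Seq : Type
  Dp : Type
  [finSeq : Fintype Seq]
  [decSeq : DecidableEq Seq]
  [finDp : Fintype Dp]
  [decDp : DecidableEq Dp]
  root : Seq
  seqs : Dp → Finset Seq
  parentSeq : Dp → Seq
  parentDp : Seq → Option Dp
  children : Seq → Finset Dp
  depth : Seq → ℕ
  seqs_nonempty : ∀ j, (seqs j).Nonempty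
  mem_children : ∀ σ j, j ∈ children σ ↔ parentSeq j = σ
  parentDp_spec : ∀ σ j, parentDp σ = some j ↔ σ ∈ seqs j
  parentDp_root : parentDp root = none
  depth_root : depth root = 0
  depth_seq : ∀ j, ∀ σ ∈ seqs j, depth σ = depth (parentSeq j) + 1

attribute [instance] TFDP.finSeq TFDP.decSeq TFDP.finDp TFDP.decDp

namespace TFDP

variable (T : TFDP)

/-- The sequence-form polytope `co X`. -/
def poly : Set (T.Seq → ℝ) :=
  {x | (∀ σ, 0 ≤ x σ) ∧ x T.root = 1 ∧ ∀ j, x (T.parentSeq j) = ∑ σ ∈ T.seqs j, x σ}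

/-- The pure (0/1) sequence-form strategies `X`. -/
def pureStrats : Set (T.Seq → ℝ) :=
  {x ∈ T.poly | ∀ σ, x σ = 0 ∨ x σ = 1}

/-- Matrix-vector multiplication for `Seq × Seq` matrices. -/
def mulVec (A : T.Seq → T.Seq → ℝ) (x : T.Seq → ℝ) : T.Seq → ℝ :=
  fun σ => ∑ σ' : T.Seq, A σ σ' * x σ'

/-- `B(j, p_σ)`, with the convention `B(j, p_∅) := 0`. -/
def Bp (B : T.Dp → T.Dp → ℝ) (j : T.Dp) (σ : T.Seq) : ℝ :=
  (T.parentDp σ).elim 0 (B j)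

/-- The UTC constraint system for a pair `(A, B)`. -/
def UTC (A : T.Seq → T.Seq → ℝ) (B : T.Dp → T.Dp → ℝ) : Prop :=
  (∀ (j : T.Dp) (σ' : T.Seq),
      A (T.parentSeq j) σ' + T.Bp B j σ'
        = (∑ σ ∈ T.seqs j, A σ σ') + ∑ j' ∈ T.children σ', B j j')
  ∧ A T.root T.root = 1
  ∧ (∀ σ', σ' ≠ T.root → A T.root σ' = 0)
  ∧ (∀ σ σ', 0 ≤ A σ σ')
  ∧ (∀ j j', 0 ≤ B j j')

end TFDP

/-!
Every linear functional is `g ⬝ᵥ ·` with `g σ = f (e σ)`. Since the polytope contains a strictly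
positive point, its linear span is the whole kernel of the matrix `A` of flow constraints
`x (p_j) = ∑ₐ x (ja)`, so `c` represents `f` on the polytope iff `c = g + μ ᵥ* A` for some
`μ : J → ℝ`. Then `c (ja) = g (ja) + ∑_{j' ∈ C_{ja}} μ j' - μ j`, and conditions (2) and (3) at the
sequences below `j` say exactly that `μ j = minₐ (g (ja) + ∑_{j' ∈ C_{ja}} μ j')`: a bottom-up
recursion with exactly one solution. Nonnegativity of `c` at the root (and at any other sequence
without a parent) comes from `f ≥ 0` at the pure strategy that follows the zeros of `c`.
-/

open Finset Matrix

namespace Matrix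

theorem exists_eq_vecMul_of_forall_mulVec_eq_zero {K m n : Type*} [Field K] [Fintype m]
    [Fintype n] [DecidableEq m] [DecidableEq n] (A : Matrix m n K) {d : n → K}
    (hd : ∀ x, A *ᵥ x = 0 → d ⬝ᵥ x = 0) : ∃ μ : m → K, d = μ ᵥ* A := by
  have hann : dotProductEquiv K n d ∈ (LinearMap.ker A.mulVecLin).dualAnnihilator :=
    (Submodule.mem_dualAnnihilator _).2 fun x hx => hd x hx
  rw [← LinearMap.range_dualMap_eq_dualAnnihilator_ker] at hann
  obtain ⟨ψ, hψ⟩ := hann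
  refine ⟨(dotProductEquiv K m).symm ψ, (dotProductEquiv K n).injective (LinearMap.ext fun x => ?_)⟩
  rw [← hψ, LinearMap.dualMap_apply, dotProductEquiv_apply_apply, mulVecLin_apply,
    ← dotProduct_mulVec]
  exact (LinearMap.congr_fun ((dotProductEquiv K m).apply_symm_apply ψ) _).symm

end Matrix

namespace Function

theorem existsUnique_isFixedPt_of_dependsOn_higher {ι α : Type*} [Finite ι] [Nonempty α]
    (r : ι → ℕ) (Φ : (ι → α) → ι → α)
    (hΦ : ∀ u v i, (∀ k, r i < r k → u k = v k) → Φ u i = Φ v i) :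
    ∃! u, IsFixedPt Φ u := by
  -- `Φ^[n] u i` only depends on the values of `u` at ranks `≥ r i + n`, so `Φ^[B + 1]` is constant.
  obtain ⟨B, hB⟩ := (Set.finite_range r).bddAbove
  have hiterate : ∀ n u v i, (∀ k, r i + n ≤ r k → u k = v k) → Φ^[n] u i = Φ^[n] v i := by
    intro n
    induction n with
    | zero => exact fun u v i h => h i le_rfl
    | succ n ih =>
      intro u v i h
      rw [iterate_succ_apply', iterate_succ_apply']
      exact hΦ _ _ i fun k hk => ih u v k fun l hl => h l (by omega)
  have hconst : ∀ u v, Φ^[B + 1] u = Φ^[B + 1] v := fun u v => funext fun i =>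
    hiterate _ u v i fun k hk => absurd (hB (Set.mem_range_self k)) (by omega)
  obtain ⟨u₀⟩ := (inferInstance : Nonempty (ι → α))
  refine ⟨Φ^[B + 1] u₀, ?_, fun u hu => ?_⟩
  · change Φ (Φ^[B + 1] u₀) = Φ^[B + 1] u₀
    rw [← iterate_succ_apply' Φ, iterate_succ_apply, hconst]
  · rw [← (hu.iterate (B + 1)).eq, hconst]

end Function

theorem Finset.inf'_eq_iff {ι α : Type*} [LinearOrder α] {s : Finset ι} (hs : s.Nonempty)
    {f : ι → α} {a : α} : s.inf' hs f = a ↔ (∀ i ∈ s, a ≤ f i) ∧ ∃ i ∈ s, f i = a := by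
  constructor
  · rintro rfl
    exact ⟨fun i hi => s.inf'_le f hi,
      (s.exists_mem_eq_inf' hs f).imp fun i hi => ⟨hi.1, hi.2.symm⟩⟩
  · rintro ⟨hle, i, hi, rfl⟩
    exact le_antisymm (s.inf'_le f hi) (s.le_inf' hs f hle)

namespace TFDP

variable {T : TFDP}

theorem depth_lt_of_mem_seqs {j : T.Dp} {σ : T.Seq} (h : σ ∈ T.seqs j) :
    T.depth (T.parentSeq j) < T.depth σ := by
  rw [T.depth_seq j σ h]; exact Nat.lt_succ_self _

theorem parentDp_eq_some {j : T.Dp} {σ : T.Seq} (h : σ ∈ T.seqs j) : T.parentDp σ = some j :=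
  (T.parentDp_spec σ j).2 h

theorem seq_induction {P : T.Seq → Prop} (orphan : ∀ σ, T.parentDp σ = none → P σ)
    (step : ∀ j, ∀ σ ∈ T.seqs j, P (T.parentSeq j) → P σ) (σ : T.Seq) : P σ := by
  induction hn : T.depth σ using Nat.strong_induction_on generalizing σ with
  | _ n ih =>
    cases hσ : T.parentDp σ with
    | none => exact orphan σ hσ
    | some j =>
      have hj := (T.parentDp_spec σ j).1 hσ
      exact step j σ hj (ih _ (hn ▸ depth_lt_of_mem_seqs hj) _ rfl)

variable (T) in
/-- The sequence-form vector of the behavioural strategy `b`, started with mass `w σ` at every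
sequence `σ` without a parent decision point. -/
def realize (w : T.Seq → ℝ) (b : T.Dp → T.Seq → ℝ) (σ : T.Seq) : ℝ :=
  match h : T.parentDp σ with
  | none => w σ
  | some j =>
    have := depth_lt_of_mem_seqs ((T.parentDp_spec σ j).1 h)
    realize w b (T.parentSeq j) * b j σ
termination_by T.depth σ

variable {w : T.Seq → ℝ} {b : T.Dp → T.Seq → ℝ}

theorem realize_of_parentDp_eq_none {σ : T.Seq} (h : T.parentDp σ = none) :
    T.realize w b σ = w σ := by
  rw [realize]; split <;> simp_all

theorem realize_of_mem_seqs {j : T.Dp} {σ : T.Seq} (h : σ ∈ T.seqs j) :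
    T.realize w b σ = T.realize w b (T.parentSeq j) * b j σ := by
  rw [realize]
  split
  · simp_all [parentDp_eq_some h]
  · next j' hj' => cases (parentDp_eq_some h).symm.trans hj'; rfl

theorem realize_nonneg (hw : 0 ≤ w) (hb : ∀ j, 0 ≤ b j) (σ : T.Seq) :
    0 ≤ T.realize w b σ := by
  induction σ using seq_induction with
  | orphan σ hσ => rw [realize_of_parentDp_eq_none hσ]; exact hw σ
  | step j σ hσ ih => rw [realize_of_mem_seqs hσ]; exact mul_nonneg ih (hb j σ)

theorem realize_pos (hw : ∀ σ, 0 < w σ) (hb : ∀ j σ, 0 < b j σ) (σ : T.Seq) :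
    0 < T.realize w b σ := by
  induction σ using seq_induction with
  | orphan σ hσ => rw [realize_of_parentDp_eq_none hσ]; exact hw σ
  | step j σ hσ ih => rw [realize_of_mem_seqs hσ]; exact mul_pos ih (hb j σ)

variable (T) in
def balanceMatrix : Matrix T.Dp T.Seq ℝ :=
  Matrix.of fun j σ => (if T.parentSeq j = σ then 1 else 0) - if σ ∈ T.seqs j then 1 else 0

theorem balanceMatrix_mulVec (x : T.Seq → ℝ) (j : T.Dp) :
    (T.balanceMatrix *ᵥ x) j = x (T.parentSeq j) - ∑ σ ∈ T.seqs j, x σ := by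
  simp [balanceMatrix, Matrix.mulVec, dotProduct, sub_mul, ite_mul, Finset.sum_sub_distrib,
    Finset.sum_ite_mem]

theorem vecMul_balanceMatrix (μ : T.Dp → ℝ) (σ : T.Seq) :
    (μ ᵥ* T.balanceMatrix) σ = ∑ j ∈ T.children σ, μ j - (T.parentDp σ).elim 0 μ := by
  have hchildren : T.children σ = univ.filter (T.parentSeq · = σ) := by
    ext j; simp [T.mem_children]
  simp only [balanceMatrix, Matrix.vecMul, dotProduct, of_apply, mul_sub, mul_ite, mul_one,
    mul_zero, Finset.sum_sub_distrib, hchildren, Finset.sum_filter, ← T.parentDp_spec]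
  cases T.parentDp σ <;> simp

theorem mem_poly_iff {x : T.Seq → ℝ} :
    x ∈ T.poly ↔ 0 ≤ x ∧ x T.root = 1 ∧ T.balanceMatrix *ᵥ x = 0 := by
  simp [poly, funext_iff, balanceMatrix_mulVec, sub_eq_zero, Pi.le_def]

theorem balanceMatrix_mulVec_realize (hb : ∀ j, ∑ σ ∈ T.seqs j, b j σ = 1) :
    T.balanceMatrix *ᵥ T.realize w b = 0 := by
  ext j
  rw [balanceMatrix_mulVec, Finset.sum_congr rfl fun σ hσ => realize_of_mem_seqs hσ,
    ← Finset.mul_sum, hb, mul_one, sub_self, Pi.zero_apply]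

theorem realize_mem_poly (hw : 0 ≤ w) (hroot : w T.root = 1) (hb0 : ∀ j, 0 ≤ b j)
    (hb1 : ∀ j, ∑ σ ∈ T.seqs j, b j σ = 1) : T.realize w b ∈ T.poly :=
  mem_poly_iff.2 ⟨realize_nonneg hw hb0, by rw [realize_of_parentDp_eq_none T.parentDp_root, hroot],
    balanceMatrix_mulVec_realize hb1⟩

theorem exists_pos_mem_poly : ∃ z ∈ T.poly, ∀ σ, 0 < z σ := by
  have hcard : ∀ j, (0 : ℝ) < #(T.seqs j) := fun j => by exact_mod_cast (T.seqs_nonempty j).card_pos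
  refine ⟨T.realize 1 fun j _ => (#(T.seqs j) : ℝ)⁻¹, realize_mem_poly zero_le_one rfl
    (fun j _ => (inv_pos.2 (hcard j)).le) fun j => ?_, realize_pos (fun _ => one_pos)
    fun j _ => inv_pos.2 (hcard j)⟩
  rw [Finset.sum_const, nsmul_eq_mul, mul_inv_cancel₀ (hcard j).ne']

theorem inv_smul_mem_poly {x : T.Seq → ℝ} (hx0 : 0 ≤ x) (hx : T.balanceMatrix *ᵥ x = 0)
    (hroot : 0 < x T.root) : (x T.root)⁻¹ • x ∈ T.poly :=
  mem_poly_iff.2 ⟨smul_nonneg (inv_nonneg.2 hroot.le) hx0, inv_mul_cancel₀ hroot.ne',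
    by rw [mulVec_smul, hx, smul_zero]⟩

theorem ker_le_span_poly : LinearMap.ker T.balanceMatrix.mulVecLin ≤ Submodule.span ℝ T.poly := by
  intro x hx
  rw [LinearMap.mem_ker, mulVecLin_apply] at hx
  obtain ⟨z, hz, hzpos⟩ := exists_pos_mem_poly (T := T)
  obtain ⟨-, -, hzA⟩ := mem_poly_iff.1 hz
  set M := ∑ σ, |x σ| / z σ + 1
  have hM : ∀ σ, |x σ| < M * z σ := fun σ => by
    rw [← div_lt_iff₀ (hzpos σ)]
    exact (Finset.single_le_sum (fun τ _ => div_nonneg (abs_nonneg (x τ)) (hzpos τ).le)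
      (Finset.mem_univ σ)).trans_lt (lt_add_one _)
  set y := x + M • z
  have hy0 : 0 ≤ y := fun σ => by
    show 0 ≤ x σ + M * z σ
    linarith [neg_abs_le (x σ), hM σ]
  have hyA : T.balanceMatrix *ᵥ y = 0 := by
    rw [mulVec_add, mulVec_smul, hzA, hx, smul_zero, add_zero]
  have hyroot : 0 < y T.root := by
    show 0 < x T.root + M * z T.root
    linarith [neg_abs_le (x T.root), hM T.root]
  have hxy : x = y T.root • (y T.root)⁻¹ • y - M • z := by
    rw [smul_inv_smul₀ hyroot.ne', add_sub_cancel_right]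
  rw [hxy]
  exact Submodule.sub_mem _ (Submodule.smul_mem _ _ (Submodule.subset_span
    (inv_smul_mem_poly hy0 hyA hyroot))) (Submodule.smul_mem _ _ (Submodule.subset_span hz))

theorem exists_eq_vecMul_of_forall_mem_poly {d : T.Seq → ℝ} (hd : ∀ x ∈ T.poly, d ⬝ᵥ x = 0) :
    ∃ μ : T.Dp → ℝ, d = μ ᵥ* T.balanceMatrix := by
  refine T.balanceMatrix.exists_eq_vecMul_of_forall_mulVec_eq_zero fun x hx => ?_
  have hspan : Submodule.span ℝ T.poly ≤ LinearMap.ker (dotProductEquiv ℝ T.Seq d) :=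
    Submodule.span_le.2 fun x hx => hd x hx
  exact hspan (ker_le_span_poly (by rwa [LinearMap.mem_ker, mulVecLin_apply]))

theorem dotProduct_eq_on_poly_iff {c g : T.Seq → ℝ} :
    (∀ x ∈ T.poly, c ⬝ᵥ x = g ⬝ᵥ x) ↔ ∃ μ : T.Dp → ℝ, c = g + μ ᵥ* T.balanceMatrix := by
  constructor
  · intro h
    obtain ⟨μ, hμ⟩ := exists_eq_vecMul_of_forall_mem_poly (d := c - g) fun x hx => by
      rw [sub_dotProduct, h x hx, sub_self]
    exact ⟨μ, by rw [← hμ, add_sub_cancel]⟩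
  · rintro ⟨μ, rfl⟩ x hx
    rw [add_dotProduct, ← dotProduct_mulVec, (mem_poly_iff.1 hx).2.2, dotProduct_zero, add_zero]

theorem map_nonneg_of_mulVec_eq_zero (f : (T.Seq → ℝ) →ₗ[ℝ] ℝ) (hf : ∀ x ∈ T.poly, 0 ≤ f x)
    {x : T.Seq → ℝ} (hx0 : 0 ≤ x) (hx : T.balanceMatrix *ᵥ x = 0) : 0 ≤ f x := by
  obtain ⟨z, hz, -⟩ := exists_pos_mem_poly (T := T)
  obtain ⟨hz0, hzroot, hzA⟩ := mem_poly_iff.1 hz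
  have hray : ∀ t : ℝ, 0 ≤ t → 0 ≤ t * f x + f z := fun t ht => by
    have hyroot : 0 < (t • x + z) T.root := by
      show 0 < t * x T.root + z T.root
      linarith [mul_nonneg ht (hx0 T.root)]
    have hy := hf _ (inv_smul_mem_poly (add_nonneg (smul_nonneg ht hx0) hz0)
      (by rw [mulVec_add, mulVec_smul, hx, hzA, smul_zero, add_zero]) hyroot)
    rw [map_smul, smul_eq_mul] at hy
    have := mul_nonneg hyroot.le hy
    rwa [mul_inv_cancel_left₀ hyroot.ne', map_add, map_smul, smul_eq_mul] at this
  by_contra! hneg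
  have := hray ((|f z| + 1) / -f x) (div_nonneg (by positivity) (by linarith))
  rw [div_mul_eq_mul_div, div_neg, mul_div_cancel_right₀ _ hneg.ne] at this
  linarith [le_abs_self (f z)]

variable (T) in
def bellman (g : T.Seq → ℝ) (μ : T.Dp → ℝ) (j : T.Dp) : ℝ :=
  (T.seqs j).inf' (T.seqs_nonempty j) fun σ => g σ + ∑ j' ∈ T.children σ, μ j'

theorem existsUnique_isFixedPt_bellman (g : T.Seq → ℝ) :
    ∃! μ, Function.IsFixedPt (T.bellman g) μ := by
  refine Function.existsUnique_isFixedPt_of_dependsOn_higher (fun j => T.depth (T.parentSeq j))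
    _ fun u v j h => Finset.inf'_congr _ rfl fun σ hσ => ?_
  refine congrArg _ (Finset.sum_congr rfl fun j' hj' => h j' ?_)
  rw [(T.mem_children σ j').1 hj']
  exact depth_lt_of_mem_seqs hσ

theorem add_vecMul_balanceMatrix_of_mem_seqs (g : T.Seq → ℝ) (μ : T.Dp → ℝ) {j : T.Dp}
    {σ : T.Seq} (h : σ ∈ T.seqs j) :
    (g + μ ᵥ* T.balanceMatrix) σ = g σ + ∑ j' ∈ T.children σ, μ j' - μ j := by
  rw [Pi.add_apply, vecMul_balanceMatrix, parentDp_eq_some h, Option.elim_some, add_sub_assoc]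

theorem isFixedPt_bellman_iff {g : T.Seq → ℝ} {μ : T.Dp → ℝ} :
    Function.IsFixedPt (T.bellman g) μ ↔ ∀ j, (∀ σ ∈ T.seqs j, 0 ≤ (g + μ ᵥ* T.balanceMatrix) σ)
      ∧ ∃ σ ∈ T.seqs j, (g + μ ᵥ* T.balanceMatrix) σ = 0 := by
  refine funext_iff.trans (forall_congr' fun j => ?_)
  rw [bellman, Finset.inf'_eq_iff]
  refine and_congr (forall₂_congr fun σ hσ => ?_)
    (exists_congr fun σ => and_congr_right fun hσ => ?_)
  · rw [add_vecMul_balanceMatrix_of_mem_seqs g μ hσ, sub_nonneg]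
  · rw [add_vecMul_balanceMatrix_of_mem_seqs g μ hσ, sub_eq_zero]

theorem nonneg_of_parentDp_eq_none {c : T.Seq → ℝ} (hc : ∀ x ∈ T.poly, 0 ≤ c ⬝ᵥ x)
    (hzero : ∀ j, ∃ σ ∈ T.seqs j, c σ = 0) {ρ : T.Seq} (hρ : T.parentDp ρ = none) : 0 ≤ c ρ := by
  choose s hs hcs using hzero
  set x := T.realize (Pi.single ρ 1) fun j => Pi.single (s j) (1 : ℝ) with hx
  have hx0 : 0 ≤ x := realize_nonneg (Pi.single_nonneg.2 zero_le_one)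
    fun j => Pi.single_nonneg.2 zero_le_one
  have hxA : T.balanceMatrix *ᵥ x = 0 := balanceMatrix_mulVec_realize fun j => by
    rw [Finset.sum_pi_single', if_pos (hs j)]
  have hsupp : ∀ σ, c σ * x σ = c σ * (Pi.single ρ 1 : T.Seq → ℝ) σ := by
    intro σ
    rw [hx]
    cases h : T.parentDp σ with
    | none => rw [realize_of_parentDp_eq_none h]
    | some j =>
      have hσ := (T.parentDp_spec σ j).1 h
      have hσρ : σ ≠ ρ := by rintro rfl; rw [hρ] at h; cases h
      rw [realize_of_mem_seqs hσ, Pi.single_eq_of_ne hσρ, mul_zero]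
      rcases eq_or_ne σ (s j) with rfl | hne
      · rw [hcs, zero_mul]
      · rw [Pi.single_eq_of_ne hne, mul_zero, mul_zero]
  have := map_nonneg_of_mulVec_eq_zero (dotProductEquiv ℝ T.Seq c) hc hx0 hxA
  rwa [dotProductEquiv_apply_apply, dotProduct, Finset.sum_congr rfl fun σ _ => hsupp σ,
    ← dotProduct, dotProduct_single, mul_one] at this

end TFDP

/-- Lemma 1: every linear functional nonnegative on the sequence-form
polytope has a unique representation `c` that is entrywise nonnegative and has a zero
entry among each decision point's actions. -/
theorem canonical_representation (T : TFDP) (f : (T.Seq → ℝ) →ₗ[ℝ] ℝ)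
    (hf : ∀ x ∈ T.poly, 0 ≤ f x) :
    ∃! c : T.Seq → ℝ,
      (∀ x ∈ T.poly, f x = ∑ σ : T.Seq, c σ * x σ)
      ∧ (∀ σ, 0 ≤ c σ)
      ∧ (∀ j : T.Dp, ∃ σ ∈ T.seqs j, c σ = 0) := by
  set g := (dotProductEquiv ℝ T.Seq).symm f
  have hfg : ∀ x, f x = g ⬝ᵥ x := fun x =>
    (LinearMap.congr_fun ((dotProductEquiv ℝ T.Seq).apply_symm_apply f) x).symm
  obtain ⟨μ, hμ, hμ_unique⟩ := T.existsUnique_isFixedPt_bellman g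
  have hcanon := TFDP.isFixedPt_bellman_iff.1 hμ
  have hrep : ∀ x ∈ T.poly, f x = (g + μ ᵥ* T.balanceMatrix) ⬝ᵥ x := fun x hx =>
    (hfg x).trans (TFDP.dotProduct_eq_on_poly_iff.2 ⟨μ, rfl⟩ x hx).symm
  refine ⟨g + μ ᵥ* T.balanceMatrix, ⟨hrep, fun σ => ?_, fun j => (hcanon j).2⟩, ?_⟩
  · cases h : T.parentDp σ with
    | none =>
      exact TFDP.nonneg_of_parentDp_eq_none (fun x hx => hrep x hx ▸ hf x hx)
        (fun j => (hcanon j).2) h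
    | some j => exact (hcanon j).1 σ ((T.parentDp_spec σ j).1 h)
  · rintro c ⟨hcrep, hcnn, hczero⟩
    obtain ⟨ν, rfl⟩ := TFDP.dotProduct_eq_on_poly_iff.1 fun x hx => (hcrep x hx).symm.trans (hfg x)
    rw [hμ_unique ν (TFDP.isFixedPt_bellman_iff.2 fun j => ⟨fun σ _ => hcnn σ, hczero j⟩)]
end

section
/- Let (A, B) be a pair of nonnegative matrices, A ∈ ℝ^{Σ×Σ}_{≥0}, B ∈ ℝ^{J×J}_{≥0}, satisfying the UTC constraint system: A(p_j, σ̃) + B(j, p_{σ̃}) = Σ_{a∈A_j} A(ja, σ̃) + Σ_{j̃∈C_{σ̃}} B(j, j̃) for all j ∈ J, σ̃ ∈ Σ; A(∅,∅)=1; A(∅,σ̃)=0 for σ̃ ≠ ∅. Then the map x ↦ Ax maps the sequence-form polytope co X into itself. -/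
/-- if `(A, B)` satisfies the UTC constraint system, then `x ↦ Ax` maps
the sequence-form polytope into itself. -/
theorem utc_maps_poly (T : TFDP) (A : T.Seq → T.Seq → ℝ) (B : T.Dp → T.Dp → ℝ)
    (h : T.UTC A B) :
    ∀ x ∈ T.poly, T.mulVec A x ∈ T.poly := by
  obtain ⟨hUTC, hroot1, hroot0, hA, hB⟩ := h
  rintro x ⟨hx0, hxr, hxj⟩
  refine ⟨fun σ => Finset.sum_nonneg fun σ' _ => mul_nonneg (hA σ σ') (hx0 σ'), ?_, ?_⟩
  · show ∑ σ' : T.Seq, A T.root σ' * x σ' = 1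
    rw [Finset.sum_eq_single T.root]
    · rw [hroot1, hxr, one_mul]
    · intro σ' _ hne; rw [hroot0 σ' hne, zero_mul]
    · intro hnm; exact absurd (Finset.mem_univ _) hnm
  · intro j
    show ∑ σ' : T.Seq, A (T.parentSeq j) σ' * x σ'
        = ∑ σ ∈ T.seqs j, ∑ σ' : T.Seq, A σ σ' * x σ'
    have hchild : ∀ σ' : T.Seq,
        T.children σ' = Finset.univ.filter (fun j' => T.parentSeq j' = σ') := by
      intro σ'; ext j'; simp [T.mem_children]
    have hfib : ∀ j'' : T.Dp,
        Finset.univ.filter (fun σ' : T.Seq => T.parentDp σ' = some j'') = T.seqs j'' := by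
      intro j''; ext σ'; simp [T.parentDp_spec]
    have hchildsum :
        ∑ σ' : T.Seq, (∑ j' ∈ T.children σ', B j j') * x σ'
          = ∑ j' : T.Dp, B j j' * x (T.parentSeq j') := by
      calc ∑ σ' : T.Seq, (∑ j' ∈ T.children σ', B j j') * x σ'
          = ∑ σ' : T.Seq, ∑ j' ∈ Finset.univ.filter (fun j' => T.parentSeq j' = σ'),
              B j j' * x (T.parentSeq j') := by
            refine Finset.sum_congr rfl fun σ' _ => ?_
            rw [hchild σ', Finset.sum_mul]
            refine Finset.sum_congr rfl fun j' hj' => ?_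
            rw [Finset.mem_filter] at hj'
            rw [hj'.2]
        _ = ∑ j' : T.Dp, B j j' * x (T.parentSeq j') :=
            Finset.sum_fiberwise _ _ _
    have hBpsum :
        ∑ σ' : T.Seq, T.Bp B j σ' * x σ'
          = ∑ j' : T.Dp, B j j' * x (T.parentSeq j') := by
      calc ∑ σ' : T.Seq, T.Bp B j σ' * x σ'
          = ∑ o : Option T.Dp, ∑ σ' ∈ Finset.univ.filter (fun σ' => T.parentDp σ' = o),
              T.Bp B j σ' * x σ' := (Finset.sum_fiberwise _ _ _).symm
        _ = ∑ j' : T.Dp, B j j' * x (T.parentSeq j') := by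
            rw [Fintype.sum_option]
            have h0 : ∑ σ' ∈ Finset.univ.filter (fun σ' => T.parentDp σ' = none),
                T.Bp B j σ' * x σ' = 0 := by
              refine Finset.sum_eq_zero fun σ' hσ' => ?_
              rw [Finset.mem_filter] at hσ'
              simp [TFDP.Bp, hσ'.2]
            rw [h0, zero_add]
            refine Finset.sum_congr rfl fun j'' _ => ?_
            rw [hfib j'']
            have : ∀ σ' ∈ T.seqs j'', T.Bp B j σ' * x σ' = B j j'' * x σ' := by
              intro σ' hσ'
              have := (T.parentDp_spec σ' j'').mpr hσ'
              simp [TFDP.Bp, this]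
            rw [Finset.sum_congr rfl this, ← Finset.mul_sum, ← hxj j'']
    calc ∑ σ' : T.Seq, A (T.parentSeq j) σ' * x σ'
        = ∑ σ' : T.Seq, ((∑ σ ∈ T.seqs j, A σ σ') * x σ'
            + (∑ j' ∈ T.children σ', B j j') * x σ' - T.Bp B j σ' * x σ') := by
          refine Finset.sum_congr rfl fun σ' _ => ?_
          have := hUTC j σ'
          have hA' : A (T.parentSeq j) σ'
              = (∑ σ ∈ T.seqs j, A σ σ') + (∑ j' ∈ T.children σ', B j j')
                - T.Bp B j σ' := by linarith
          rw [hA']; ring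
      _ = ∑ σ' : T.Seq, (∑ σ ∈ T.seqs j, A σ σ') * x σ'
            + ∑ σ' : T.Seq, (∑ j' ∈ T.children σ', B j j') * x σ'
            - ∑ σ' : T.Seq, T.Bp B j σ' * x σ' := by
          rw [Finset.sum_sub_distrib, Finset.sum_add_distrib]
      _ = ∑ σ' : T.Seq, (∑ σ ∈ T.seqs j, A σ σ') * x σ' := by
          rw [hchildsum, hBpsum]; ring
      _ = ∑ σ ∈ T.seqs j, ∑ σ' : T.Seq, A σ σ' * x σ' := by
          rw [Finset.sum_comm]
          exact Finset.sum_congr rfl fun σ' _ => by rw [Finset.sum_mul]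
end

section
/- The claim 'every extreme point of the set of affine self-maps of a polytope maps vertices to vertices' fails for general polytopes: let P ⊆ ℝ² be the trapezoid with vertices A=(0,0), B=(8,0), C=(4,2), D=(0,2). There exists an affine map φ with φ(P) ⊆ P, φ(A)=D, φ(D)=A, φ(B)=C, which is an extreme point of the set of affine self-maps of P, yet φ(C)=(2,0) is not a vertex of P. -/
/-! The vertices `A`, `B`, `D` span the plane affinely, so an affine map is determined by its values
there. `φ` sends them to the vertices `D`, `C`, `A`, each exposed by a linear functional and hence an
extreme point of `P`, so a splitting `φ = (1 - t) • ψ₁ + t • ψ₂` into self-maps of `P` forces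
`ψ₁ = φ` on `A`, `B`, `D`, hence everywhere. Meanwhile `φ(C) = (2, 0)` lies inside the edge `AB`. -/

open Set

theorem AffineMap.mapsTo_convexHull {𝕜 E F : Type*} [Ring 𝕜] [PartialOrder 𝕜] [IsOrderedRing 𝕜]
    [AddCommGroup E] [AddCommGroup F] [Module 𝕜 E] [Module 𝕜 F] (f : E →ᵃ[𝕜] F) {s : Set E}
    {t : Set F} (h : MapsTo f s (convexHull 𝕜 t)) : MapsTo f (convexHull 𝕜 s) (convexHull 𝕜 t) :=
  convexHull_min h ((convex_convexHull 𝕜 t).affine_preimage f)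

theorem AffineMap.mem_extremePoints_of_mapsTo_extremePoints {𝕜 V₁ P₁ V₂ : Type*} [CommRing 𝕜]
    [PartialOrder 𝕜] [IsOrderedRing 𝕜] [AddCommGroup V₁] [Module 𝕜 V₁] [AddTorsor V₁ P₁]
    [AddCommGroup V₂] [Module 𝕜 V₂] {S : Set (P₁ →ᵃ[𝕜] V₂)} {s : Set P₁} {K : Set V₂}
    {φ : P₁ →ᵃ[𝕜] V₂} (hs : affineSpan 𝕜 s = ⊤) (hS : ∀ ψ ∈ S, MapsTo ψ s K) (hφ : φ ∈ S)
    (hφs : MapsTo φ s (K.extremePoints 𝕜)) : φ ∈ S.extremePoints 𝕜 := by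
  refine ⟨hφ, fun ψ₁ hψ₁ ψ₂ hψ₂ hφψ => AffineMap.ext_on hs fun p hp => ?_⟩
  obtain ⟨a, b, ha, hb, hab, rfl⟩ := hφψ
  exact (hφs hp).2 (hS ψ₁ hψ₁ hp) (hS ψ₂ hψ₂ hp) ⟨a, b, ha, hb, hab, rfl⟩

def trapezoid : Set (ℝ × ℝ) := convexHull ℝ {(0, 0), (8, 0), (4, 2), (0, 2)}

theorem subset_trapezoid {p : ℝ × ℝ}
    (hp : p ∈ ({(0, 0), (8, 0), (4, 2), (0, 2)} : Set (ℝ × ℝ))) : p ∈ trapezoid :=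
  subset_convexHull ℝ _ hp

theorem trapezoid_subset :
    trapezoid ⊆ {p | 0 ≤ p.1 ∧ 0 ≤ p.2 ∧ p.2 ≤ 2 ∧ p.1 + 2 * p.2 ≤ 8} := by
  refine convexHull_min ?_ ?_
  · rintro p (rfl | rfl | rfl | rfl) <;> norm_num
  · rintro x ⟨hx₁, hx₂, hx₃, hx₄⟩ y ⟨hy₁, hy₂, hy₃, hy₄⟩ a b ha hb hab
    simp only [mem_ofPred_eq, Prod.fst_add, Prod.snd_add, Prod.smul_fst, Prod.smul_snd, smul_eq_mul]
    refine ⟨by positivity, by positivity, by nlinarith, by nlinarith⟩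

theorem mem_extremePoints_trapezoid {v : ℝ × ℝ}
    (hv : v ∈ ({(0, 0), (8, 0), (4, 2), (0, 2)} : Set (ℝ × ℝ))) (a b : ℝ)
    (h : ∀ y : ℝ × ℝ, 0 ≤ y.1 → 0 ≤ y.2 → y.2 ≤ 2 → y.1 + 2 * y.2 ≤ 8 →
      a * y.1 + b * y.2 ≤ a * v.1 + b * v.2 ∧ (a * v.1 + b * v.2 ≤ a * y.1 + b * y.2 → y = v)) :
    v ∈ trapezoid.extremePoints ℝ := by
  refine exposedPoints_subset_extremePoints ⟨subset_trapezoid hv,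
    a • ContinuousLinearMap.fst ℝ ℝ ℝ + b • ContinuousLinearMap.snd ℝ ℝ ℝ, fun y hy => ?_⟩
  obtain ⟨h₁, h₂, h₃, h₄⟩ := trapezoid_subset hy
  simpa using h y h₁ h₂ h₃ h₄

theorem two_zero_mem_openSegment : ((2, 0) : ℝ × ℝ) ∈ openSegment ℝ (0, 0) (8, 0) :=
  ⟨3 / 4, 1 / 4, by norm_num, by norm_num, by norm_num, by norm_num⟩

theorem two_zero_mem_trapezoid : ((2, 0) : ℝ × ℝ) ∈ trapezoid :=
  (convex_convexHull ℝ _).openSegment_subset (subset_trapezoid (by simp))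
    (subset_trapezoid (by simp)) two_zero_mem_openSegment

theorem two_zero_notMem_extremePoints_trapezoid : ((2, 0) : ℝ × ℝ) ∉ trapezoid.extremePoints ℝ :=
  fun h => by
    have := h.2 (subset_trapezoid (by simp)) (subset_trapezoid (by simp)) two_zero_mem_openSegment
    norm_num at this

theorem affineSpan_trapezoid_corner_eq_top :
    affineSpan ℝ ({(0, 0), (8, 0), (0, 2)} : Set (ℝ × ℝ)) = ⊤ := by
  refine eq_top_iff.2 fun p _ => ?_
  have hp : p = ((p.1 / 8) • (((8, 0) : ℝ × ℝ) -ᵥ (0, 0)) +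
      (p.2 / 2) • (((0, 2) : ℝ × ℝ) -ᵥ (0, 0))) +ᵥ ((0, 0) : ℝ × ℝ) := by
    ext <;> simp
  rw [hp]
  refine AffineSubspace.vadd_mem_of_mem_direction ?_ (subset_affineSpan ℝ _ (by simp))
  rw [direction_affineSpan]
  exact add_mem (Submodule.smul_mem _ _ (vsub_mem_vectorSpan ℝ (by simp) (by simp)))
    (Submodule.smul_mem _ _ (vsub_mem_vectorSpan ℝ (by simp) (by simp)))

noncomputable def trapezoidMap : (ℝ × ℝ) →ᵃ[ℝ] ℝ × ℝ where
  toFun p := (p.1 / 2, 2 - p.2)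
  linear := ((2⁻¹ : ℝ) • LinearMap.fst ℝ ℝ ℝ).prod (-LinearMap.snd ℝ ℝ ℝ)
  map_vadd' p v := by
    ext <;> simp <;> ring

@[simp]
theorem trapezoidMap_apply (p : ℝ × ℝ) : trapezoidMap p = (p.1 / 2, 2 - p.2) :=
  rfl

theorem trapezoidMap_mapsTo : MapsTo trapezoidMap trapezoid trapezoid := by
  refine trapezoidMap.mapsTo_convexHull ?_
  rintro p (rfl | rfl | rfl | rfl)
  all_goals norm_num
  exacts [subset_trapezoid (by simp), subset_trapezoid (by simp), two_zero_mem_trapezoid,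
    subset_trapezoid (by simp)]

theorem trapezoidMap_mapsTo_extremePoints :
    MapsTo trapezoidMap {(0, 0), (8, 0), (0, 2)} (trapezoid.extremePoints ℝ) := by
  rintro p (rfl | rfl | rfl) <;> norm_num
  · exact mem_extremePoints_trapezoid (by simp) (-1) 1 fun y h₁ h₂ h₃ h₄ =>
      ⟨by norm_num; linarith, fun h => Prod.ext (by simp; linarith) (by simp; linarith)⟩
  · exact mem_extremePoints_trapezoid (by simp) 1 3 fun y h₁ h₂ h₃ h₄ =>
      ⟨by norm_num; linarith, fun h => Prod.ext (by simp; linarith) (by simp; linarith)⟩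
  · exact mem_extremePoints_trapezoid (by simp) (-1) (-1) fun y h₁ h₂ h₃ h₄ =>
      ⟨by norm_num; linarith, fun h => Prod.ext (by simp; linarith) (by simp; linarith)⟩

/-- for the trapezoid `P = conv{A,B,C,D}` with `A=(0,0)`, `B=(8,0)`,
`C=(4,2)`, `D=(0,2)`, the affine self-map `φ` of `P` with `φ(A)=D`, `φ(D)=A`, `φ(B)=C`
is an extreme point of the set of affine self-maps of `P`, yet `φ(C)=(2,0)` is not a
vertex (extreme point) of `P`. -/
theorem trapezoid_counterexample :
    ∃ φ : (ℝ × ℝ) →ᵃ[ℝ] ℝ × ℝ,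
      φ (0, 0) = (0, 2) ∧ φ (0, 2) = (0, 0) ∧ φ (8, 0) = (4, 2) ∧
      (∀ p ∈ convexHull ℝ ({(0, 0), (8, 0), (4, 2), (0, 2)} : Set (ℝ × ℝ)), φ p ∈
        convexHull ℝ ({(0, 0), (8, 0), (4, 2), (0, 2)} : Set (ℝ × ℝ))) ∧
      φ ∈ Set.extremePoints ℝ
        {ψ : (ℝ × ℝ) →ᵃ[ℝ] ℝ × ℝ |
          ∀ p ∈ convexHull ℝ ({(0, 0), (8, 0), (4, 2), (0, 2)} : Set (ℝ × ℝ)), ψ p ∈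
            convexHull ℝ ({(0, 0), (8, 0), (4, 2), (0, 2)} : Set (ℝ × ℝ))} ∧
      φ (4, 2) = (2, 0) ∧
      ((2, 0) : ℝ × ℝ) ∉ Set.extremePoints ℝ
        (convexHull ℝ ({(0, 0), (8, 0), (4, 2), (0, 2)} : Set (ℝ × ℝ))) := by
  have hselfMaps : ∀ ψ ∈ {ψ : (ℝ × ℝ) →ᵃ[ℝ] ℝ × ℝ | MapsTo ψ trapezoid trapezoid},
      MapsTo ψ {(0, 0), (8, 0), (0, 2)} trapezoid := fun ψ hψ =>
    hψ.mono_left fun p hp => subset_trapezoid (by rcases hp with rfl | rfl | rfl <;> simp)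
  refine ⟨trapezoidMap, by norm_num, by norm_num, by norm_num, trapezoidMap_mapsTo,
    AffineMap.mem_extremePoints_of_mapsTo_extremePoints affineSpan_trapezoid_corner_eq_top hselfMaps
      trapezoidMap_mapsTo trapezoidMap_mapsTo_extremePoints, by norm_num,
    two_zero_notMem_extremePoints_trapezoid⟩
end

section
/- (Gordon–Greenwald–Marks reduction) Let X ⊆ ℝ^d be compact convex, Φ a convex set of affine maps φ : X → X, and suppose an algorithm produces transformations φ^(1),...,φ^(T) ∈ Φ with external regret bound max_{φ∈Φ} Σ_{t=1}^T ⟨u^(t), φ(x^(t))⟩ − ⟨u^(t), φ^(t)(x^(t))⟩ ≤ R, where at each t the point x^(t) ∈ X is chosen as a fixed point φ^(t)(x^(t)) = x^(t). Then the Φ-regret of the sequence (x^(t)) satisfies max_{φ∈Φ} Σ_{t=1}^T ⟨u^(t), φ(x^(t)) − x^(t)⟩ ≤ R. -/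
/-- Gordon–Greenwald–Marks reduction: if transformations `φᵗ ∈ Φ` have
external regret at most `R` on the induced utilities, and each `xᵗ` is a fixed point of
`φᵗ`, then the `Φ`-regret of the sequence `(xᵗ)` is at most `R`. -/
theorem ggm_reduction {d : ℕ} (X : Set (Fin d → ℝ)) (hXc : IsCompact X)
    (hXconv : Convex ℝ X)
    (Φ : Set ((Fin d → ℝ) →ᵃ[ℝ] (Fin d → ℝ))) (hΦ : Convex ℝ Φ)
    (hΦX : ∀ φ ∈ Φ, ∀ x ∈ X, φ x ∈ X)
    (Tn : ℕ) (u : Fin Tn → (Fin d → ℝ))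
    (φt : Fin Tn → ((Fin d → ℝ) →ᵃ[ℝ] (Fin d → ℝ)))
    (x : Fin Tn → (Fin d → ℝ)) (R : ℝ)
    (hφt : ∀ t, φt t ∈ Φ) (hx : ∀ t, x t ∈ X)
    (hfix : ∀ t, φt t (x t) = x t)
    (hreg : ∀ φ ∈ Φ,
      ∑ t, ((∑ i, u t i * φ (x t) i) - ∑ i, u t i * (φt t) (x t) i) ≤ R) :
    ∀ φ ∈ Φ, ∑ t, ∑ i, u t i * (φ (x t) i - x t i) ≤ R := by
  intro φ hφ
  have h := hreg φ hφ
  calc ∑ t, ∑ i, u t i * (φ (x t) i - x t i)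
      = ∑ t, ((∑ i, u t i * φ (x t) i) - ∑ i, u t i * (φt t) (x t) i) := by
        refine Finset.sum_congr rfl fun t _ => ?_
        rw [hfix t, ← Finset.sum_sub_distrib]
        exact Finset.sum_congr rfl fun i _ => by ring
    _ ≤ R := h
end

section
/- Every matrix A in canonical form (all entries nonnegative and, for every σ ∈ Σ and decision point j̃, some action a ∈ A_{j̃} with A(σ, j̃a)=0) that represents a linear map co X → co X satisfies, for every decision point j and every fully-mixed strategy x ∈ co X (all coordinates strictly positive): Σ_{σ̃} x(σ̃)(Σ_{a∈A_j} A(ja,σ̃) − A(p_j,σ̃)) = 0, and the nonnegative B defined by B(j,j̃) = min_{a∈A_{j̃}} B̃(j, j̃a) (with B̃(j,σ̃) = Σ_{a∈A_j} A(ja,σ̃) + Σ_{j̃'∈C_{σ̃}} B(j,j̃') − A(p_j,σ̃), defined bottom-up) satisfies B̃(j, j̃a) = B(j, j̃) for all a ∈ A_{j̃}. -/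
namespace KCAux
open Finset
variable (T : TFDP)

def dmax : ℕ := Finset.univ.sup T.depth

lemma depth_le_dmax (σ : T.Seq) : T.depth σ ≤ dmax T := Finset.le_sup (Finset.mem_univ σ)

noncomputable def Baux (g : T.Seq → ℝ) : ℕ → T.Dp → ℝ
  | 0 => fun _ => 0
  | n+1 => fun jt => (T.seqs jt).inf' (T.seqs_nonempty jt)
      (fun σ => g σ + ∑ j' ∈ T.children σ, Baux g n j')

lemma Baux_stab (g : T.Seq → ℝ) : ∀ (k n m : ℕ) (jt : T.Dp),
    dmax T < T.depth (T.parentSeq jt) + k → k ≤ n → k ≤ m →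
    Baux T g n jt = Baux T g m jt := by
  intro k
  induction k with
  | zero =>
    intro n m jt h _ _
    exact absurd h (by simpa using depth_le_dmax T (T.parentSeq jt))
  | succ k ih =>
    intro n m jt h hn hm
    obtain ⟨n', rfl⟩ : ∃ n', n = n' + 1 := ⟨n - 1, by omega⟩
    obtain ⟨m', rfl⟩ : ∃ m', m = m' + 1 := ⟨m - 1, by omega⟩
    simp only [Baux]
    apply Finset.inf'_congr _ rfl
    intro σ hσ
    have hd : T.depth σ = T.depth (T.parentSeq jt) + 1 := T.depth_seq jt σ hσ
    congr 1
    apply Finset.sum_congr rfl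
    intro j' hj'
    have hps : T.parentSeq j' = σ := (T.mem_children σ j').1 hj'
    exact ih n' m' j' (by rw [hps, hd]; omega) (by omega) (by omega)

noncomputable def Bdef (g : T.Seq → ℝ) (jt : T.Dp) : ℝ := Baux T g (dmax T + 1) jt

lemma Bdef_eq (g : T.Seq → ℝ) (jt : T.Dp) :
    Bdef T g jt = (T.seqs jt).inf' (T.seqs_nonempty jt)
      (fun σ => g σ + ∑ j' ∈ T.children σ, Bdef T g j') := by
  have h1 : Bdef T g jt = Baux T g (dmax T + 2) jt :=
    Baux_stab T g (dmax T + 1) _ _ jt (by omega) le_rfl (by omega)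
  rw [h1]
  rfl

noncomputable def strat (w : T.Seq → ℝ) (σ : T.Seq) : ℝ :=
  match h : T.parentDp σ with
  | none => 1
  | some j => strat w (T.parentSeq j) * w σ
termination_by T.depth σ
decreasing_by
  have := T.depth_seq j σ ((T.parentDp_spec σ j).1 h)
  omega

lemma strat_none {w : T.Seq → ℝ} {σ : T.Seq} (h : T.parentDp σ = none) :
    strat T w σ = 1 := by
  rw [strat, h]

lemma strat_some {w : T.Seq → ℝ} {σ : T.Seq} {j : T.Dp} (h : T.parentDp σ = some j) :
    strat T w σ = strat T w (T.parentSeq j) * w σ := by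
  rw [strat, h]

end KCAux

namespace KCAux
open Finset
variable (T : TFDP)

lemma strat_pos {w : T.Seq → ℝ} (hw : ∀ σ, 0 < w σ) (σ : T.Seq) : 0 < strat T w σ := by
  have H : ∀ n σ, T.depth σ ≤ n → 0 < strat T w σ := by
    intro n
    induction n with
    | zero =>
      intro σ hσ
      cases h : T.parentDp σ with
      | none => rw [strat_none T h]; norm_num
      | some j =>
        have := T.depth_seq j σ ((T.parentDp_spec σ j).1 h)
        omega
    | succ n ih =>
      intro σ hσ
      cases h : T.parentDp σ with
      | none => rw [strat_none T h]; norm_num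
      | some j =>
        rw [strat_some T h]
        have hd := T.depth_seq j σ ((T.parentDp_spec σ j).1 h)
        exact mul_pos (ih _ (by omega)) (hw σ)
  exact H (T.depth σ) σ le_rfl

lemma strat_nonneg {w : T.Seq → ℝ} (hw : ∀ σ, 0 ≤ w σ) (σ : T.Seq) : 0 ≤ strat T w σ := by
  have H : ∀ n σ, T.depth σ ≤ n → 0 ≤ strat T w σ := by
    intro n
    induction n with
    | zero =>
      intro σ hσ
      cases h : T.parentDp σ with
      | none => rw [strat_none T h]; norm_num
      | some j =>
        have := T.depth_seq j σ ((T.parentDp_spec σ j).1 h)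
        omega
    | succ n ih =>
      intro σ hσ
      cases h : T.parentDp σ with
      | none => rw [strat_none T h]; norm_num
      | some j =>
        rw [strat_some T h]
        have hd := T.depth_seq j σ ((T.parentDp_spec σ j).1 h)
        exact mul_nonneg (ih _ (by omega)) (hw σ)
  exact H (T.depth σ) σ le_rfl

lemma strat_mem_poly {w : T.Seq → ℝ} (hw0 : ∀ σ, 0 ≤ w σ)
    (hw1 : ∀ j, ∑ σ ∈ T.seqs j, w σ = 1) : strat T w ∈ T.poly := by
  refine ⟨strat_nonneg T hw0, strat_none T T.parentDp_root, fun j => ?_⟩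
  have h : ∀ σ ∈ T.seqs j, strat T w σ = strat T w (T.parentSeq j) * w σ := fun σ hσ =>
    strat_some T ((T.parentDp_spec σ j).2 hσ)
  rw [Finset.sum_congr rfl h, ← Finset.mul_sum, hw1 j, mul_one]

lemma sum_children (F : T.Seq → T.Dp → ℝ) :
    ∑ σ' : T.Seq, ∑ j' ∈ T.children σ', F σ' j' = ∑ j' : T.Dp, F (T.parentSeq j') j' := by
  have h1 : ∀ σ' : T.Seq, T.children σ' = Finset.univ.filter (fun j' => T.parentSeq j' = σ') := by
    intro σ'; ext j'; simp [T.mem_children]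
  calc ∑ σ' : T.Seq, ∑ j' ∈ T.children σ', F σ' j'
      = ∑ σ' : T.Seq, ∑ j' ∈ Finset.univ.filter (fun j' => T.parentSeq j' = σ'),
          F (T.parentSeq j') j' := by
        refine Finset.sum_congr rfl fun σ' _ => ?_
        rw [← h1]
        exact Finset.sum_congr rfl fun j' hj' => by rw [(T.mem_children σ' j').1 hj']
    _ = ∑ j' : T.Dp, F (T.parentSeq j') j' := Finset.sum_fiberwise _ _ _

lemma sum_seq_split (f : T.Seq → ℝ) :
    ∑ σ : T.Seq, f σ = (∑ σ ∈ Finset.univ.filter (fun σ => T.parentDp σ = none), f σ)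
      + ∑ j' : T.Dp, ∑ σ ∈ T.seqs j', f σ := by
  have h := Finset.sum_fiberwise (Finset.univ : Finset T.Seq) T.parentDp f
  rw [← h, Fintype.sum_option]
  congr 1
  refine Finset.sum_congr rfl fun j' _ => ?_
  refine Finset.sum_congr ?_ (fun _ _ => rfl)
  ext σ; simp [T.parentDp_spec]

lemma flow (A : T.Seq → T.Seq → ℝ)
    (hmap : ∀ x ∈ T.poly, T.mulVec A x ∈ T.poly) (j : T.Dp) :
    ∀ x ∈ T.poly, ∑ σ' : T.Seq, x σ' * ((∑ σ ∈ T.seqs j, A σ σ') - A (T.parentSeq j) σ') = 0 := by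
  intro x hx
  have h1 := (hmap x hx).2.2 j
  simp only [TFDP.mulVec] at h1
  rw [Finset.sum_comm] at h1
  have h2 : ∀ σ' : T.Seq, x σ' * ((∑ σ ∈ T.seqs j, A σ σ') - A (T.parentSeq j) σ')
      = (∑ σ ∈ T.seqs j, A σ σ' * x σ') - A (T.parentSeq j) σ' * x σ' := by
    intro σ'
    rw [mul_sub, mul_comm (x σ'), Finset.sum_mul, mul_comm (x σ')]
  rw [Finset.sum_congr rfl fun σ' _ => h2 σ', Finset.sum_sub_distrib, ← h1, sub_self]

end KCAux

namespace KCAux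
open Finset
variable (T : TFDP)

noncomputable def Bm (A : T.Seq → T.Seq → ℝ) (j jt : T.Dp) : ℝ :=
  Bdef T (fun σ' => (∑ σ ∈ T.seqs j, A σ σ') - A (T.parentSeq j) σ') jt

noncomputable def Btm (A : T.Seq → T.Seq → ℝ) (j : T.Dp) (σ' : T.Seq) : ℝ :=
  ((∑ σ ∈ T.seqs j, A σ σ') - A (T.parentSeq j) σ') + ∑ j' ∈ T.children σ', Bm T A j j'

lemma Bm_fix (A : T.Seq → T.Seq → ℝ) (j jt : T.Dp) :
    Bm T A j jt = (T.seqs jt).inf' (T.seqs_nonempty jt) (Btm T A j) :=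
  Bdef_eq T _ jt

lemma Bm_le (A : T.Seq → T.Seq → ℝ) (j jt : T.Dp) {σ : T.Seq} (hσ : σ ∈ T.seqs jt) :
    Bm T A j jt ≤ Btm T A j σ := by
  rw [Bm_fix]; exact Finset.inf'_le _ hσ

lemma Bm_exists (A : T.Seq → T.Seq → ℝ) (j jt : T.Dp) :
    ∃ σ ∈ T.seqs jt, Bm T A j jt = Btm T A j σ := by
  rw [Bm_fix]
  obtain ⟨σ, hσ, h⟩ := Finset.exists_mem_eq_inf' (T.seqs_nonempty jt) (Btm T A j)
  exact ⟨σ, hσ, h⟩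

lemma star (A : T.Seq → T.Seq → ℝ)
    (hmap : ∀ x ∈ T.poly, T.mulVec A x ∈ T.poly) (j : T.Dp)
    (x : T.Seq → ℝ) (hx : x ∈ T.poly) :
    (∑ σ ∈ Finset.univ.filter (fun σ => T.parentDp σ = none), x σ * Btm T A j σ)
      + ∑ j' : T.Dp, ∑ σ ∈ T.seqs j', x σ * (Btm T A j σ - Bm T A j j') = 0 := by
  have e1 : ∑ σ' : T.Seq, x σ' * Btm T A j σ'
      = ∑ j' : T.Dp, ∑ σ ∈ T.seqs j', x σ * Bm T A j j' := by
    calc ∑ σ' : T.Seq, x σ' * Btm T A j σ'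
        = (∑ σ' : T.Seq, x σ' * ((∑ σ ∈ T.seqs j, A σ σ') - A (T.parentSeq j) σ'))
          + ∑ σ' : T.Seq, ∑ j' ∈ T.children σ', x σ' * Bm T A j j' := by
          simp only [Btm, mul_add, Finset.sum_add_distrib, Finset.mul_sum]
      _ = 0 + ∑ j' : T.Dp, x (T.parentSeq j') * Bm T A j j' := by
          rw [flow T A hmap j x hx, sum_children T (fun σ' j' => x σ' * Bm T A j j')]
      _ = ∑ j' : T.Dp, ∑ σ ∈ T.seqs j', x σ * Bm T A j j' := by
          rw [zero_add]
          exact Finset.sum_congr rfl fun j' _ => by rw [hx.2.2 j', Finset.sum_mul]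
  have e2 : ∑ σ' : T.Seq, x σ' * Btm T A j σ'
      = (∑ σ ∈ Finset.univ.filter (fun σ => T.parentDp σ = none), x σ * Btm T A j σ)
        + ∑ j' : T.Dp, ∑ σ ∈ T.seqs j', x σ * Btm T A j σ :=
    sum_seq_split T _
  have e3 : ∑ j' : T.Dp, ∑ σ ∈ T.seqs j', x σ * (Btm T A j σ - Bm T A j j')
      = (∑ j' : T.Dp, ∑ σ ∈ T.seqs j', x σ * Btm T A j σ)
        - ∑ j' : T.Dp, ∑ σ ∈ T.seqs j', x σ * Bm T A j j' := by
    simp [mul_sub, Finset.sum_sub_distrib]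
  rw [e3]; linarith

end KCAux

namespace KCAux
open Finset
variable (T : TFDP)

lemma main_eq (A : T.Seq → T.Seq → ℝ)
    (hmap : ∀ x ∈ T.poly, T.mulVec A x ∈ T.poly) (j : T.Dp) :
    ∀ jt : T.Dp, ∀ σ ∈ T.seqs jt, Btm T A j σ = Bm T A j jt := by
  classical
  -- minimum-selecting pure strategy
  choose σmin hσmin hBmin using Bm_exists T A j
  set w₂ : T.Seq → ℝ := fun σ => (T.parentDp σ).elim 1 (fun jt => if σ = σmin jt then 1 else 0)
    with hw₂
  have hw₂0 : ∀ σ, 0 ≤ w₂ σ := by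
    intro σ
    simp only [hw₂]
    cases h : T.parentDp σ with
    | none => simp [h]
    | some jt => simp only [h, Option.elim_some]; split <;> norm_num
  have hw₂1 : ∀ jt, ∑ σ ∈ T.seqs jt, w₂ σ = 1 := by
    intro jt
    have h : ∀ σ ∈ T.seqs jt, w₂ σ = if σ = σmin jt then 1 else 0 := by
      intro σ hσ
      simp only [hw₂, (T.parentDp_spec σ jt).2 hσ, Option.elim_some]
    rw [Finset.sum_congr rfl h]
    simp [hσmin jt]
  have hx₂ := strat_mem_poly T hw₂0 hw₂1
  have h2 := star T A hmap j _ hx₂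
  -- second sum vanishes for the pure strategy
  have hz : ∑ j' : T.Dp, ∑ σ ∈ T.seqs j', strat T w₂ σ * (Btm T A j σ - Bm T A j j') = 0 := by
    refine Finset.sum_eq_zero fun j' _ => Finset.sum_eq_zero fun σ hσ => ?_
    by_cases hc : σ = σmin j'
    · subst hc
      rw [← hBmin j', sub_self, mul_zero]
    · have hs : T.parentDp σ = some j' := (T.parentDp_spec σ j').2 hσ
      rw [strat_some T hs]
      have : w₂ σ = 0 := by simp only [hw₂, hs, Option.elim_some]; simp [hc]
      rw [this, mul_zero, zero_mul]
  have hN2 : ∀ (y : T.Seq → ℝ),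
      (∀ σ, T.parentDp σ = none → y σ = 1) →
      ∑ σ ∈ Finset.univ.filter (fun σ => T.parentDp σ = none), y σ * Btm T A j σ
        = ∑ σ ∈ Finset.univ.filter (fun σ => T.parentDp σ = none), Btm T A j σ := by
    intro y hy
    refine Finset.sum_congr rfl fun σ hσ => ?_
    rw [hy σ (by simpa using hσ), one_mul]
  have hNzero : ∑ σ ∈ Finset.univ.filter (fun σ => T.parentDp σ = none), Btm T A j σ = 0 := by
    rw [hz, add_zero, hN2 _ (fun σ h => strat_none T h)] at h2
    exact h2
  -- fully mixed strategy
  set w₁ : T.Seq → ℝ := fun σ => (T.parentDp σ).elim 1 (fun jt => ((T.seqs jt).card : ℝ)⁻¹)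
    with hw₁
  have hw₁pos : ∀ σ, 0 < w₁ σ := by
    intro σ
    simp only [hw₁]
    cases h : T.parentDp σ with
    | none => simp [h]
    | some jt =>
      simp only [h, Option.elim_some]
      have : 0 < (T.seqs jt).card := Finset.card_pos.2 (T.seqs_nonempty jt)
      positivity
  have hw₁1 : ∀ jt, ∑ σ ∈ T.seqs jt, w₁ σ = 1 := by
    intro jt
    have h : ∀ σ ∈ T.seqs jt, w₁ σ = ((T.seqs jt).card : ℝ)⁻¹ := by
      intro σ hσ
      simp only [hw₁, (T.parentDp_spec σ jt).2 hσ, Option.elim_some]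
    rw [Finset.sum_congr rfl h, Finset.sum_const, nsmul_eq_mul]
    have h0 : 0 < (T.seqs jt).card := Finset.card_pos.2 (T.seqs_nonempty jt)
    have : ((T.seqs jt).card : ℝ) ≠ 0 := by exact_mod_cast h0.ne'
    field_simp
  have hx₁ := strat_mem_poly T (fun σ => (hw₁pos σ).le) hw₁1
  have h1 := star T A hmap j _ hx₁
  rw [hN2 _ (fun σ h => strat_none T h), hNzero, zero_add] at h1
  -- all terms nonneg, sum zero
  have hterm : ∀ j' : T.Dp, ∀ σ ∈ T.seqs j',
      0 ≤ strat T w₁ σ * (Btm T A j σ - Bm T A j j') := fun j' σ hσ =>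
    mul_nonneg (strat_pos T hw₁pos σ).le (by linarith [Bm_le T A j j' hσ])
  have hall := (Finset.sum_eq_zero_iff_of_nonneg
    (fun j' _ => Finset.sum_nonneg (hterm j'))).1 h1
  intro jt σ hσ
  have := (Finset.sum_eq_zero_iff_of_nonneg (fun σ hσ => hterm jt σ hσ)).1
    (hall jt (Finset.mem_univ jt)) σ hσ
  have hx := strat_pos T hw₁pos σ
  have : Btm T A j σ - Bm T A j jt = 0 := by
    rcases mul_eq_zero.1 this with h | h
    · exact absurd h hx.ne'
    · exact h
  linarith

lemma Bm_nonneg (A : T.Seq → T.Seq → ℝ)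
    (hnn : ∀ σ σ', 0 ≤ A σ σ')
    (hcanon : ∀ (σ : T.Seq) (jt : T.Dp), ∃ σ' ∈ T.seqs jt, A σ σ' = 0)
    (hmap : ∀ x ∈ T.poly, T.mulVec A x ∈ T.poly) (j jt : T.Dp) :
    0 ≤ Bm T A j jt := by
  have H : ∀ n : ℕ, ∀ jt : T.Dp, dmax T + 1 - T.depth (T.parentSeq jt) ≤ n →
      0 ≤ Bm T A j jt := by
    intro n
    induction n with
    | zero =>
      intro jt h
      have := depth_le_dmax T (T.parentSeq jt)
      omega
    | succ n ih =>
      intro jt h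
      obtain ⟨σ₀, hσ₀, hA0⟩ := hcanon (T.parentSeq j) jt
      rw [← main_eq T A hmap j jt σ₀ hσ₀]
      have hd : T.depth σ₀ = T.depth (T.parentSeq jt) + 1 := T.depth_seq jt σ₀ hσ₀
      have h1 : 0 ≤ ∑ σ ∈ T.seqs j, A σ σ₀ := Finset.sum_nonneg fun σ _ => hnn σ σ₀
      have h2 : 0 ≤ ∑ j' ∈ T.children σ₀, Bm T A j j' := by
        refine Finset.sum_nonneg fun j' hj' => ih j' ?_
        have hps : T.parentSeq j' = σ₀ := (T.mem_children σ₀ j').1 hj'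
        rw [hps, hd]; omega
      simp only [Btm, hA0]
      linarith
  exact H (dmax T + 1) jt (by omega)

end KCAux



/-- key computation in the proof of UTC = Lin: for a canonical matrix
`A` representing a linear self-map of `co X`, the flow-conservation sum vanishes against
every fully-mixed strategy, and the bottom-up construction of `(B̃, B)` (with `B(j,j̃)`
the minimum of `B̃(j, j̃a)` over actions `a`) yields a nonnegative `B` with
`B̃(j, j̃a) = B(j, j̃)` for all actions `a`. -/
theorem key_computation (T : TFDP) (A : T.Seq → T.Seq → ℝ)
    (hnn : ∀ σ σ', 0 ≤ A σ σ')
    (hcanon : ∀ (σ : T.Seq) (jt : T.Dp), ∃ σ' ∈ T.seqs jt, A σ σ' = 0)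
    (hmap : ∀ x ∈ T.poly, T.mulVec A x ∈ T.poly) :
    (∀ j : T.Dp, ∀ x ∈ T.poly, (∀ σ, 0 < x σ) →
        ∑ σ' : T.Seq, x σ' * ((∑ σ ∈ T.seqs j, A σ σ') - A (T.parentSeq j) σ') = 0) ∧
    ∃ (B : T.Dp → T.Dp → ℝ) (Bt : T.Dp → T.Seq → ℝ),
      (∀ (j : T.Dp) (σ' : T.Seq),
          Bt j σ' = (∑ σ ∈ T.seqs j, A σ σ') + (∑ j' ∈ T.children σ', B j j')
              - A (T.parentSeq j) σ') ∧
      (∀ j j' : T.Dp, (∀ σ ∈ T.seqs j', B j j' ≤ Bt j σ) ∧ ∃ σ ∈ T.seqs j', B j j' = Bt j σ) ∧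
      (∀ j j', 0 ≤ B j j') ∧
      (∀ j j' : T.Dp, ∀ σ ∈ T.seqs j', Bt j σ = B j j') := by
  classical
  refine ⟨fun j x hx _ => KCAux.flow T A hmap j x hx,
    KCAux.Bm T A, KCAux.Btm T A, ?_, ?_, ?_, ?_⟩
  · intro j σ'
    simp only [KCAux.Btm]
    ring
  · intro j j'
    exact ⟨fun σ hσ => KCAux.Bm_le T A j j' hσ, KCAux.Bm_exists T A j j'⟩
  · intro j j'
    exact KCAux.Bm_nonneg T A hnn hcanon hmap j j'
  · intro j j' σ hσ
    exact KCAux.main_eq T A hmap j j' σ hσ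
end
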